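/- Let n be a positive integer and μ > n−1 a real number. Let P : ℝ × (0,∞) → ℝ be a smooth solution of Δ̂ₙ P + (μ+1) r⁻² P = 0, define Q = −(z/r)·P, and let R be smooth satisfying (1/2)(μ−(n−1))·R = r·∂P/∂z + r·∂Q/∂r + (n+1)·Q. Then on ℝ × (0,∞): Δ̂ₙ Q + r⁻²(μ+n+3) Q − r⁻²(μ+1−n) R = 0 and Δ̂ₙ R + r⁻²(μ+1−n) R − 4 r⁻² Q = 0. -/

import Mathlib

/-- Partial derivative in the first variable `z`. -/
noncomputable def pdz (f : ℝ → ℝ → ℝ) (z r : ℝ) : ℝ := deriv (fun z' => f z' r) z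

/-- Partial derivative in the second variable `r`. -/
noncomputable def pdr (f : ℝ → ℝ → ℝ) (z r : ℝ) : ℝ := deriv (fun r' => f z r') r

/-- The operator `Δ̂ₙ f = -∂²f/∂z² - ∂²f/∂r² - (n/r)·∂f/∂r`. -/
noncomputable def hatLap (n : ℕ) (f : ℝ → ℝ → ℝ) (z r : ℝ) : ℝ :=
  - pdz (pdz f) z r - pdr (pdr f) z r - ((n : ℝ) / r) * pdr f z r

/-- The first order operator `∂_V f = r·∂f/∂z - z·∂f/∂r`. -/
noncomputable def dV (f : ℝ → ℝ → ℝ) (z r : ℝ) : ℝ :=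
  r * pdz f z r - z * pdr f z r


open Function

def Sm2 (f : ℝ → ℝ → ℝ) : Prop :=
  ContDiffOn ℝ (⊤ : ℕ∞) (Function.uncurry f) {p : ℝ × ℝ | 0 < p.2}

lemma isOpenU : IsOpen {p : ℝ × ℝ | 0 < p.2} := isOpen_lt continuous_const continuous_snd

lemma Sm2.diffAt {f : ℝ → ℝ → ℝ} (hf : Sm2 f) {z r : ℝ} (hr : 0 < r) :
    DifferentiableAt ℝ (uncurry f) (z, r) :=
  (hf.contDiffAt (isOpenU.mem_nhds hr)).differentiableAt (by simp)

lemma pdz_eq_fderiv {f : ℝ → ℝ → ℝ} {z r : ℝ}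
    (hd : DifferentiableAt ℝ (uncurry f) (z, r)) :
    pdz f z r = fderiv ℝ (uncurry f) (z, r) (1, 0) := by
  have hι : HasDerivAt (fun z' : ℝ => ((z' : ℝ), r)) ((1 : ℝ), (0 : ℝ)) z :=
    (hasDerivAt_id z).prodMk (hasDerivAt_const z r)
  exact (hd.hasFDerivAt.comp_hasDerivAt z hι).deriv

lemma pdr_eq_fderiv {f : ℝ → ℝ → ℝ} {z r : ℝ}
    (hd : DifferentiableAt ℝ (uncurry f) (z, r)) :
    pdr f z r = fderiv ℝ (uncurry f) (z, r) (0, 1) := by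
  have hι : HasDerivAt (fun r' : ℝ => ((z : ℝ), r')) ((0 : ℝ), (1 : ℝ)) r :=
    (hasDerivAt_const r z).prodMk (hasDerivAt_id r)
  exact (hd.hasFDerivAt.comp_hasDerivAt r hι).deriv

lemma Sm2.hdz {f : ℝ → ℝ → ℝ} (hf : Sm2 f) {z r : ℝ} (hr : 0 < r) :
    HasDerivAt (fun z' => f z' r) (pdz f z r) z := by
  have hd := hf.diffAt (z := z) hr
  have hι : HasDerivAt (fun z' : ℝ => ((z' : ℝ), r)) ((1 : ℝ), (0 : ℝ)) z :=
    (hasDerivAt_id z).prodMk (hasDerivAt_const z r)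
  have h := hd.hasFDerivAt.comp_hasDerivAt z hι
  rwa [← pdz_eq_fderiv hd] at h

lemma Sm2.hdr {f : ℝ → ℝ → ℝ} (hf : Sm2 f) {z r : ℝ} (hr : 0 < r) :
    HasDerivAt (fun r' => f z r') (pdr f z r) r := by
  have hd := hf.diffAt (z := z) hr
  have hι : HasDerivAt (fun r' : ℝ => ((z : ℝ), r')) ((0 : ℝ), (1 : ℝ)) r :=
    (hasDerivAt_const r z).prodMk (hasDerivAt_id r)
  have h := hd.hasFDerivAt.comp_hasDerivAt r hι
  rwa [← pdr_eq_fderiv hd] at h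

lemma Sm2.pdz' {f : ℝ → ℝ → ℝ} (hf : Sm2 f) : Sm2 (pdz f) := by
  have h1 : ContDiffOn ℝ (⊤ : ℕ∞) (fderiv ℝ (uncurry f)) {p : ℝ × ℝ | 0 < p.2} :=
    hf.fderiv_of_isOpen isOpenU (by exact_mod_cast le_top)
  have h2 := (ContinuousLinearMap.apply ℝ ℝ ((1 : ℝ), (0 : ℝ))).contDiff.comp_contDiffOn h1
  exact h2.congr fun p hp => by
    have : p = (p.1, p.2) := rfl
    rw [show uncurry (pdz f) p = pdz f p.1 p.2 from rfl,
      pdz_eq_fderiv (hf.diffAt (z := p.1) hp)]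
    rfl

lemma Sm2.pdr' {f : ℝ → ℝ → ℝ} (hf : Sm2 f) : Sm2 (pdr f) := by
  have h1 : ContDiffOn ℝ (⊤ : ℕ∞) (fderiv ℝ (uncurry f)) {p : ℝ × ℝ | 0 < p.2} :=
    hf.fderiv_of_isOpen isOpenU (by exact_mod_cast le_top)
  have h2 := (ContinuousLinearMap.apply ℝ ℝ ((0 : ℝ), (1 : ℝ))).contDiff.comp_contDiffOn h1
  exact h2.congr fun p hp => by
    rw [show uncurry (pdr f) p = pdr f p.1 p.2 from rfl,
      pdr_eq_fderiv (hf.diffAt (z := p.1) hp)]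
    rfl

lemma two_le_inf : (2 : WithTop ℕ∞) ≤ ((⊤ : ℕ∞) : WithTop ℕ∞) := by
  rw [show ((2:WithTop ℕ∞)) = (((2:ℕ∞)):WithTop ℕ∞) by rfl]
  exact WithTop.coe_le_coe.mpr le_top

lemma Sm2.fderiv_apply_eq {f : ℝ → ℝ → ℝ} (hf : Sm2 f) {z r : ℝ} (hr : 0 < r)
    (v w : ℝ × ℝ) :
    fderiv ℝ (fun p => fderiv ℝ (uncurry f) p v) (z, r) w
      = fderiv ℝ (fderiv ℝ (uncurry f)) (z, r) w v := by
  have h1 : ContDiffOn ℝ (⊤ : ℕ∞) (fderiv ℝ (uncurry f)) {p : ℝ × ℝ | 0 < p.2} :=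
    hf.fderiv_of_isOpen isOpenU (by exact_mod_cast le_top)
  have hd : DifferentiableAt ℝ (fderiv ℝ (uncurry f)) (z, r) :=
    (h1.contDiffAt (isOpenU.mem_nhds hr)).differentiableAt (by simp)
  have h2 : HasFDerivAt (fun p => fderiv ℝ (uncurry f) p v)
      (((ContinuousLinearMap.apply ℝ ℝ v).comp (fderiv ℝ (fderiv ℝ (uncurry f)) (z, r)))) (z, r) :=
    (ContinuousLinearMap.apply ℝ ℝ v).hasFDerivAt.comp (z, r) hd.hasFDerivAt
  rw [h2.fderiv]; rfl

lemma Sm2.clairaut {f : ℝ → ℝ → ℝ} (hf : Sm2 f) {z r : ℝ} (hr : 0 < r) :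
    pdr (pdz f) z r = pdz (pdr f) z r := by
  have hsym : IsSymmSndFDerivAt ℝ (uncurry f) (z, r) :=
    (hf.contDiffAt (isOpenU.mem_nhds hr)).isSymmSndFDerivAt (by simpa using two_le_inf)
  have e1 : uncurry (pdz f) =ᶠ[nhds ((z : ℝ), r)]
      (fun p => fderiv ℝ (uncurry f) p (1, 0)) := by
    filter_upwards [isOpenU.mem_nhds hr] with p hp
    exact pdz_eq_fderiv (hf.diffAt (z := p.1) hp)
  have e2 : uncurry (pdr f) =ᶠ[nhds ((z : ℝ), r)]
      (fun p => fderiv ℝ (uncurry f) p (0, 1)) := by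
    filter_upwards [isOpenU.mem_nhds hr] with p hp
    exact pdr_eq_fderiv (hf.diffAt (z := p.1) hp)
  calc pdr (pdz f) z r = fderiv ℝ (uncurry (pdz f)) (z, r) (0, 1) :=
        pdr_eq_fderiv (hf.pdz'.diffAt hr)
    _ = fderiv ℝ (fun p => fderiv ℝ (uncurry f) p (1, 0)) (z, r) (0, 1) := by
        rw [e1.fderiv_eq]
    _ = fderiv ℝ (fderiv ℝ (uncurry f)) (z, r) (0, 1) (1, 0) :=
        hf.fderiv_apply_eq hr _ _
    _ = fderiv ℝ (fderiv ℝ (uncurry f)) (z, r) (1, 0) (0, 1) := hsym.eq _ _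
    _ = fderiv ℝ (fun p => fderiv ℝ (uncurry f) p (0, 1)) (z, r) (1, 0) :=
        (hf.fderiv_apply_eq hr _ _).symm
    _ = fderiv ℝ (uncurry (pdr f)) (z, r) (1, 0) := by rw [e2.fderiv_eq]
    _ = pdz (pdr f) z r := (pdz_eq_fderiv (hf.pdr'.diffAt hr)).symm

lemma pdz_congr {f g : ℝ → ℝ → ℝ} {r : ℝ} (h : ∀ z', f z' r = g z' r) (z : ℝ) :
    pdz f z r = pdz g z r := by
  unfold pdz; congr 1; funext z'; exact h z'

lemma pdr_congr {f g : ℝ → ℝ → ℝ} {z r : ℝ} (hr : 0 < r)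
    (h : ∀ r', 0 < r' → f z r' = g z r') : pdr f z r = pdr g z r := by
  unfold pdr
  apply Filter.EventuallyEq.deriv_eq
  filter_upwards [eventually_gt_nhds hr] with r' hr'
  exact h r' hr'

lemma pdz_eq_of {f : ℝ → ℝ → ℝ} {g : ℝ → ℝ} {z r d : ℝ}
    (h : ∀ z', f z' r = g z') (hg : HasDerivAt g d z) : pdz f z r = d := by
  unfold pdz
  rw [show (fun z' => f z' r) = g from funext h]
  exact hg.deriv

lemma pdr_eq_of {f : ℝ → ℝ → ℝ} {g : ℝ → ℝ} {z r d : ℝ} (hr : 0 < r)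
    (h : ∀ r', 0 < r' → f z r' = g r') (hg : HasDerivAt g d r) : pdr f z r = d := by
  unfold pdr
  have he : (fun r' => f z r') =ᶠ[nhds r] g := by
    filter_upwards [eventually_gt_nhds hr] with r' hr'
    exact h r' hr'
  rw [he.deriv_eq]
  exact hg.deriv


set_option maxHeartbeats 2000000 in
/-- Lemma B.2 of the paper: if `μ > n-1`, `Δ̂ₙ P + (μ+1) r⁻² P = 0`, `Q = -(z/r)P` and
`(1/2)(μ-(n-1)) R = r ∂_z P + r ∂_r Q + (n+1) Q`, then
`Δ̂ₙ Q + r⁻²(μ+n+3) Q - r⁻²(μ+1-n) R = 0` and `Δ̂ₙ R + r⁻²(μ+1-n) R - 4 r⁻² Q = 0`. -/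
theorem system_two_tensors_W (n : ℕ) (hn : 0 < n) (mu : ℝ) (hmu : (n : ℝ) - 1 < mu)
    (P R : ℝ → ℝ → ℝ)
    (hPsmooth : ContDiffOn ℝ (⊤ : ℕ∞) (Function.uncurry P) {p : ℝ × ℝ | 0 < p.2})
    (hRsmooth : ContDiffOn ℝ (⊤ : ℕ∞) (Function.uncurry R) {p : ℝ × ℝ | 0 < p.2})
    (hP : ∀ z r : ℝ, 0 < r → hatLap n P z r + (mu + 1) / r ^ 2 * P z r = 0)
    (Q : ℝ → ℝ → ℝ) (hQ : ∀ z r : ℝ, 0 < r → Q z r = -(z / r) * P z r)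
    (hR : ∀ z r : ℝ, 0 < r →
      1 / 2 * (mu - ((n : ℝ) - 1)) * R z r
        = r * pdz P z r + r * pdr Q z r + ((n : ℝ) + 1) * Q z r) :
    ∀ z r : ℝ, 0 < r →
      (hatLap n Q z r + (mu + n + 3) / r ^ 2 * Q z r - (mu + 1 - n) / r ^ 2 * R z r = 0)
      ∧ (hatLap n R z r + (mu + 1 - n) / r ^ 2 * R z r - 4 / r ^ 2 * Q z r = 0) := by
  have hc : mu - ((n : ℝ) - 1) ≠ 0 := sub_ne_zero.mpr (ne_of_gt hmu)
  have hPsm : Sm2 P := hPsmooth.of_le (by simp)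
  have hA : Sm2 (pdz P) := hPsm.pdz'
  have hB : Sm2 (pdr P) := hPsm.pdr'
  have hAA : Sm2 (pdz (pdz P)) := hA.pdz'
  have hBB : Sm2 (pdr (pdr P)) := hB.pdr'
  have hAB : Sm2 (pdr (pdz P)) := hA.pdr'
  have hBz : Sm2 (pdz (pdr P)) := hB.pdz'
  -- the PDE in plain form
  have hE : ∀ z r : ℝ, 0 < r →
      pdz (pdz P) z r + pdr (pdr P) z r + (n : ℝ) / r * pdr P z r
        = (mu + 1) / r ^ 2 * P z r := by
    intro z r hr
    have h := hP z r hr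
    simp only [hatLap] at h
    linarith
  -- first derivatives of Q
  have hQz : ∀ z r : ℝ, 0 < r →
      pdz Q z r = -(1 / r) * P z r - z / r * pdz P z r := by
    intro z r hr
    have hg : HasDerivAt (fun z' => -(z' / r) * P z' r)
        (-(1 / r) * P z r + -(z / r) * pdz P z r) z :=
      (((hasDerivAt_id z).div_const r).neg).mul (hPsm.hdz hr)
    rw [pdz_eq_of (fun z' => hQ z' r hr) hg]; ring
  have hQr : ∀ z r : ℝ, 0 < r →
      pdr Q z r = z / r ^ 2 * P z r - z / r * pdr P z r := by
    intro z r hr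
    have hg : HasDerivAt (fun r' => -(z * r'⁻¹) * P z r')
        (-(z * -(r ^ 2)⁻¹) * P z r + -(z * r⁻¹) * pdr P z r) r :=
      (((hasDerivAt_inv hr.ne').const_mul z).neg).mul (hPsm.hdr hr)
    rw [pdr_eq_of hr (fun r' hr' => by rw [hQ z r' hr']; ring) hg]; ring
  -- R in closed form
  have hRf : ∀ z r : ℝ, 0 < r →
      R z r = 2 / (mu - ((n : ℝ) - 1)) *
        (r * pdz P z r - (n : ℝ) * z / r * P z r - z * pdr P z r) := by
    intro z r hr
    have h := hR z r hr
    have h2 : R z r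
        = 2 / (mu - ((n : ℝ) - 1)) * (1 / 2 * (mu - ((n : ℝ) - 1)) * R z r) := by
      field_simp
    rw [h, hQ z r hr, hQr z r hr] at h2
    rw [h2]; field_simp; ring
  intro z r hr
  constructor
  · -- first equation
    have hQzz : pdz (pdz Q) z r
        = -(2 / r) * pdz P z r - z / r * pdz (pdz P) z r := by
      have hg : HasDerivAt (fun z' => -(1 / r) * P z' r - z' / r * pdz P z' r)
          (-(1 / r) * pdz P z r - (1 / r * pdz P z r + z / r * pdz (pdz P) z r)) z :=
        ((hPsm.hdz hr).const_mul (-(1 / r))).sub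
          (((hasDerivAt_id z).div_const r).mul (hA.hdz hr))
      rw [pdz_eq_of (fun z' => hQz z' r hr) hg]; ring
    have hQrr : pdr (pdr Q) z r
        = -(2 * z / r ^ 3) * P z r + 2 * z / r ^ 2 * pdr P z r
          - z / r * pdr (pdr P) z r := by
      have hg : HasDerivAt
          (fun r' => z * (r' ^ 2)⁻¹ * P z r' - z * r'⁻¹ * pdr P z r')
          ((z * (-(2 * r ^ (2 - 1)) / (r ^ 2) ^ 2)) * P z r
              + z * (r ^ 2)⁻¹ * pdr P z r
            - ((z * -(r ^ 2)⁻¹) * pdr P z r + z * r⁻¹ * pdr (pdr P) z r)) r :=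
        ((((hasDerivAt_pow 2 r).inv (pow_ne_zero 2 hr.ne')).const_mul z).mul
            (hPsm.hdr hr)).sub
          (((hasDerivAt_inv hr.ne').const_mul z).mul (hB.hdr hr))
      rw [pdr_eq_of hr (fun r' hr' => by rw [hQr z r' hr']; ring) hg]
      push_cast; field_simp; ring
    have hBBv : pdr (pdr P) z r
        = (mu + 1) / r ^ 2 * P z r - (n : ℝ) / r * pdr P z r - pdz (pdz P) z r := by
      linarith [hE z r hr]
    simp only [hatLap]
    rw [hQzz, hQrr, hQr z r hr, hQ z r hr, hRf z r hr, hBBv]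
    field_simp
    ring
  · -- second equation
    have s1 : ∀ z r : ℝ, 0 < r → pdr (pdz P) z r = pdz (pdr P) z r :=
      fun z r hr => hPsm.clairaut hr
    have s2 : pdz (pdz (pdr P)) z r = pdr (pdz (pdz P)) z r := by
      have e1 : pdz (pdz (pdr P)) z r = pdz (pdr (pdz P)) z r :=
        pdz_congr (fun z' => (s1 z' r hr).symm) z
      rw [e1]; exact (hA.clairaut hr).symm
    have s3 : pdr (pdr (pdz P)) z r = pdz (pdr (pdr P)) z r := by
      have e1 : pdr (pdr (pdz P)) z r = pdr (pdz (pdr P)) z r :=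
        pdr_congr hr (fun r' hr' => s1 z r' hr')
      rw [e1]; exact hB.clairaut hr
    -- derivatives of R
    have hRz : ∀ z r : ℝ, 0 < r →
        pdz R z r = 2 / (mu - ((n : ℝ) - 1)) *
          (r * pdz (pdz P) z r - (n : ℝ) / r * P z r - (n : ℝ) * z / r * pdz P z r
            - pdr P z r - z * pdz (pdr P) z r) := by
      intro z r hr
      have hg : HasDerivAt
          (fun z' => 2 / (mu - ((n : ℝ) - 1)) *
            (r * pdz P z' r - (n : ℝ) * z' / r * P z' r - z' * pdr P z' r))
          (2 / (mu - ((n : ℝ) - 1)) *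
            (r * pdz (pdz P) z r
              - (((n : ℝ) * 1) / r * P z r + (n : ℝ) * z / r * pdz P z r)
              - (1 * pdr P z r + z * pdz (pdr P) z r))) z :=
        ((((hA.hdz hr).const_mul r).sub
            ((((hasDerivAt_id z).const_mul (n : ℝ)).div_const r).mul (hPsm.hdz hr))).sub
          ((hasDerivAt_id z).mul (hB.hdz hr))).const_mul _
      rw [pdz_eq_of (fun z' => hRf z' r hr) hg]; ring
    have hRr : ∀ z r : ℝ, 0 < r →
        pdr R z r = 2 / (mu - ((n : ℝ) - 1)) *
          (pdz P z r + r * pdr (pdz P) z r + (n : ℝ) * z / r ^ 2 * P z r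
            - (n : ℝ) * z / r * pdr P z r - z * pdr (pdr P) z r) := by
      intro z r hr
      have hg : HasDerivAt
          (fun r' => 2 / (mu - ((n : ℝ) - 1)) *
            (r' * pdz P z r' - (n : ℝ) * z * r'⁻¹ * P z r' - z * pdr P z r'))
          (2 / (mu - ((n : ℝ) - 1)) *
            ((1 * pdz P z r + r * pdr (pdz P) z r)
              - (((n : ℝ) * z) * -(r ^ 2)⁻¹ * P z r + (n : ℝ) * z * r⁻¹ * pdr P z r)
              - z * pdr (pdr P) z r)) r :=
        ((((hasDerivAt_id r).mul (hA.hdr hr)).sub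
            (((hasDerivAt_inv hr.ne').const_mul ((n : ℝ) * z)).mul (hPsm.hdr hr))).sub
          ((hB.hdr hr).const_mul z)).const_mul _
      rw [pdr_eq_of hr (fun r' hr' => by rw [hRf z r' hr']; ring) hg]; ring
    have hRzz : pdz (pdz R) z r = 2 / (mu - ((n : ℝ) - 1)) *
        (r * pdz (pdz (pdz P)) z r - 2 * (n : ℝ) / r * pdz P z r
          - (n : ℝ) * z / r * pdz (pdz P) z r - 2 * pdz (pdr P) z r
          - z * pdr (pdz (pdz P)) z r) := by
      have hg : HasDerivAt
          (fun z' => 2 / (mu - ((n : ℝ) - 1)) *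
            (r * pdz (pdz P) z' r - (n : ℝ) / r * P z' r
              - (n : ℝ) * z' / r * pdz P z' r - pdr P z' r - z' * pdz (pdr P) z' r))
          (2 / (mu - ((n : ℝ) - 1)) *
            (r * pdz (pdz (pdz P)) z r - (n : ℝ) / r * pdz P z r
              - (((n : ℝ) * 1) / r * pdz P z r + (n : ℝ) * z / r * pdz (pdz P) z r)
              - pdz (pdr P) z r
              - (1 * pdz (pdr P) z r + z * pdz (pdz (pdr P)) z r))) z :=
        ((((((hAA.hdz hr).const_mul r).sub
                ((hPsm.hdz hr).const_mul ((n : ℝ) / r))).sub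
              ((((hasDerivAt_id z).const_mul (n : ℝ)).div_const r).mul (hA.hdz hr))).sub
            (hB.hdz hr)).sub
          ((hasDerivAt_id z).mul (hBz.hdz hr))).const_mul _
      rw [pdz_eq_of (fun z' => hRz z' r hr) hg, s2]; ring
    have hRrr : pdr (pdr R) z r = 2 / (mu - ((n : ℝ) - 1)) *
        (2 * pdz (pdr P) z r + r * pdz (pdr (pdr P)) z r
          - 2 * (n : ℝ) * z / r ^ 3 * P z r + 2 * (n : ℝ) * z / r ^ 2 * pdr P z r
          - (n : ℝ) * z / r * pdr (pdr P) z r - z * pdr (pdr (pdr P)) z r) := by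
      have hg : HasDerivAt
          (fun r' => 2 / (mu - ((n : ℝ) - 1)) *
            (pdz P z r' + r' * pdr (pdz P) z r'
              + (n : ℝ) * z * (r' ^ 2)⁻¹ * P z r'
              - (n : ℝ) * z * r'⁻¹ * pdr P z r' - z * pdr (pdr P) z r'))
          (2 / (mu - ((n : ℝ) - 1)) *
            (pdr (pdz P) z r
              + (1 * pdr (pdz P) z r + r * pdr (pdr (pdz P)) z r)
              + (((n : ℝ) * z) * (-(2 * r ^ (2 - 1)) / (r ^ 2) ^ 2) * P z r
                  + (n : ℝ) * z * (r ^ 2)⁻¹ * pdr P z r)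
              - (((n : ℝ) * z) * -(r ^ 2)⁻¹ * pdr P z r
                  + (n : ℝ) * z * r⁻¹ * pdr (pdr P) z r)
              - z * pdr (pdr (pdr P)) z r)) r :=
        (((((hA.hdr hr).add
                ((hasDerivAt_id r).mul (hAB.hdr hr))).add
              ((((hasDerivAt_pow 2 r).inv (pow_ne_zero 2 hr.ne')).const_mul
                  ((n : ℝ) * z)).mul (hPsm.hdr hr))).sub
            (((hasDerivAt_inv hr.ne').const_mul ((n : ℝ) * z)).mul (hB.hdr hr))).sub
          ((hBB.hdr hr).const_mul z)).const_mul _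
      rw [pdr_eq_of hr (fun r' hr' => by rw [hRr z r' hr']; ring) hg, s3, s1 z r hr]
      push_cast; field_simp; ring
    -- differentiated PDE in z
    have hEz : pdz (pdz (pdz P)) z r + pdz (pdr (pdr P)) z r
        + (n : ℝ) / r * pdz (pdr P) z r = (mu + 1) / r ^ 2 * pdz P z r := by
      have t : HasDerivAt
          (fun z' => pdz (pdz P) z' r + pdr (pdr P) z' r + (n : ℝ) / r * pdr P z' r)
          (pdz (pdz (pdz P)) z r + pdz (pdr (pdr P)) z r
            + (n : ℝ) / r * pdz (pdr P) z r) z :=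
        ((hAA.hdz hr).add (hBB.hdz hr)).add ((hB.hdz hr).const_mul ((n : ℝ) / r))
      have t2 : HasDerivAt (fun z' => (mu + 1) / r ^ 2 * P z' r)
          ((mu + 1) / r ^ 2 * pdz P z r) z := (hPsm.hdz hr).const_mul _
      have hfe : (fun z' => pdz (pdz P) z' r + pdr (pdr P) z' r
          + (n : ℝ) / r * pdr P z' r) = (fun z' => (mu + 1) / r ^ 2 * P z' r) :=
        funext fun z' => hE z' r hr
      rw [hfe] at t
      exact t.unique t2
    -- differentiated PDE in r
    have hEr : pdr (pdz (pdz P)) z r + pdr (pdr (pdr P)) z r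
        + ((n : ℝ) * -(r ^ 2)⁻¹ * pdr P z r + (n : ℝ) * r⁻¹ * pdr (pdr P) z r)
        = (mu + 1) * (-(2 * r ^ (2 - 1)) / (r ^ 2) ^ 2) * P z r
          + (mu + 1) * (r ^ 2)⁻¹ * pdr P z r := by
      have t1 : HasDerivAt
          (fun r' => pdz (pdz P) z r' + pdr (pdr P) z r' + (n : ℝ) * r'⁻¹ * pdr P z r')
          (pdr (pdz (pdz P)) z r + pdr (pdr (pdr P)) z r
            + ((n : ℝ) * -(r ^ 2)⁻¹ * pdr P z r + (n : ℝ) * r⁻¹ * pdr (pdr P) z r)) r :=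
        ((hAA.hdr hr).add (hBB.hdr hr)).add
          (((hasDerivAt_inv hr.ne').const_mul (n : ℝ)).mul (hB.hdr hr))
      have t2 : HasDerivAt (fun r' => (mu + 1) * (r' ^ 2)⁻¹ * P z r')
          ((mu + 1) * (-(2 * r ^ (2 - 1)) / (r ^ 2) ^ 2) * P z r
            + (mu + 1) * (r ^ 2)⁻¹ * pdr P z r) r :=
        (((hasDerivAt_pow 2 r).inv (pow_ne_zero 2 hr.ne')).const_mul (mu + 1)).mul
          (hPsm.hdr hr)
      have heq : (fun r' => (mu + 1) * (r' ^ 2)⁻¹ * P z r')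
          =ᶠ[nhds r] (fun r' => pdz (pdz P) z r' + pdr (pdr P) z r'
            + (n : ℝ) * r'⁻¹ * pdr P z r') := by
        filter_upwards [eventually_gt_nhds hr] with r' hr'
        have h := hE z r' hr'
        field_simp at h ⊢
        linarith
      exact (t1.congr_of_eventuallyEq heq).unique t2
    have hBBv : pdr (pdr P) z r
        = (mu + 1) / r ^ 2 * P z r - (n : ℝ) / r * pdr P z r - pdz (pdz P) z r := by
      linarith [hE z r hr]
    have hABBv : pdz (pdr (pdr P)) z r
        = (mu + 1) / r ^ 2 * pdz P z r - pdz (pdz (pdz P)) z r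
          - (n : ℝ) / r * pdz (pdr P) z r := by linarith
    have hBBBv : pdr (pdr (pdr P)) z r
        = -pdr (pdz (pdz P)) z r + (n : ℝ) / r ^ 2 * pdr P z r
          - (n : ℝ) / r * pdr (pdr P) z r - 2 * (mu + 1) / r ^ 3 * P z r
          + (mu + 1) / r ^ 2 * pdr P z r := by
      push_cast at hEr
      linear_combination hEr - 2 * (mu + 1) * P z r * (r⁻¹) ^ 3 * mul_inv_cancel₀ hr.ne'
    simp only [hatLap]
    rw [hRzz, hRrr, hRr z r hr, hRf z r hr, hQ z r hr, hBBBv, hABBv, hBBv, s1 z r hr]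
    field_simp
    ring
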